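/- arXiv:2111.07912 — 3 statements merged into one kernel-verified Lean document; each statement's English description precedes it below -/
import Mathlib

section
/- The sum of q^{|λ|} over all integer partitions λ whose Young diagram fits inside a k × (n−k) rectangle equals the Gaussian binomial coefficient binom(n,k)_q. -/
open scoped Classical

noncomputable def Srect (k m : ℕ) : RatFunc ℚ :=
  ∑ l : {l : Fin k → Fin (m + 1) // Antitone fun i => (l i : ℕ)},
    (RatFunc.X : RatFunc ℚ) ^ (∑ i, (l.1 i : ℕ))

lemma Srect_rec (k m : ℕ) :
    Srect (k + 1) (m + 1) =
      Srect k (m + 1) + (RatFunc.X : RatFunc ℚ) ^ (k + 1) * Srect (k + 1) m := by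
  classical
  unfold Srect
  rw [← Finset.sum_filter_add_sum_filter_not Finset.univ
    (fun l : {l : Fin (k+1) → Fin (m+2) // Antitone fun i => (l i : ℕ)} =>
      l.1 (Fin.last k) = 0)]
  congr 1
  · -- last entry zero : restrict
    refine Finset.sum_bij' (i := fun l _ =>
        (⟨fun i => l.1 i.castSucc, fun a b hab => l.2 (Fin.castSucc_le_castSucc_iff.mpr hab)⟩ :
          {l : Fin k → Fin (m+2) // Antitone fun i => (l i : ℕ)}))
      (j := fun l' _ => ⟨Fin.snoc l'.1 0, ?_⟩) ?_ ?_ ?_ ?_ ?_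
    · intro a b hab
      simp only
      induction b using Fin.lastCases with
      | last => simp [Fin.snoc_last]
      | cast j =>
        induction a using Fin.lastCases with
        | last => exact absurd hab (Fin.castSucc_lt_last j).not_ge
        | cast i =>
          simp only [Fin.snoc_castSucc]
          exact l'.2 (Fin.castSucc_le_castSucc_iff.mp hab)
    · intro a ha; exact Finset.mem_univ _
    · intro a ha
      simp only [Finset.mem_filter, Finset.mem_univ, true_and]
      simp [Fin.snoc_last]
    · intro a ha
      simp only [Finset.mem_filter, Finset.mem_univ, true_and] at ha
      apply Subtype.ext; funext i
      induction i using Fin.lastCases with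
      | last => simp [Fin.snoc_last, ha]
      | cast j => simp [Fin.snoc_castSucc]
    · intro a ha
      apply Subtype.ext; funext i
      simp [Fin.snoc_castSucc]
    · intro a ha
      simp only [Finset.mem_filter, Finset.mem_univ, true_and] at ha
      congr 1
      rw [Fin.sum_univ_castSucc]
      simp [ha]
  · -- last entry positive : subtract one
    rw [Finset.mul_sum]
    refine Finset.sum_bij' (i := fun l hl =>
        (⟨fun i => (⟨(l.1 i : ℕ) - 1, by have := (l.1 i).isLt; omega⟩ : Fin (m + 1)),
          fun a b hab => Nat.sub_le_sub_right (l.2 hab) 1⟩ :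
          {l : Fin (k+1) → Fin (m+1) // Antitone fun i => (l i : ℕ)}))
      (j := fun l' _ =>
        (⟨fun i => (⟨(l'.1 i : ℕ) + 1, by have := (l'.1 i).isLt; omega⟩ : Fin (m + 2)),
          fun a b hab => Nat.add_le_add_right (l'.2 hab) 1⟩ :
          {l : Fin (k+1) → Fin (m+2) // Antitone fun i => (l i : ℕ)})) ?_ ?_ ?_ ?_ ?_
    · intro a ha; exact Finset.mem_univ _
    · intro a ha
      simp only [Finset.mem_filter, Finset.mem_univ, true_and]
      intro h
      have := congrArg (Fin.val) h
      simp at this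
    · intro a ha
      simp only [Finset.mem_filter, Finset.mem_univ, true_and] at ha
      have hpos : ∀ i, 1 ≤ (a.1 i : ℕ) := by
        intro i
        have h1 : (a.1 (Fin.last k) : ℕ) ≤ (a.1 i : ℕ) := a.2 (Fin.le_last i)
        have h2 : (a.1 (Fin.last k) : ℕ) ≠ 0 := fun h => ha (Fin.ext h)
        omega
      apply Subtype.ext; funext i
      apply Fin.ext
      simp only
      have := hpos i
      omega
    · intro a ha
      apply Subtype.ext; funext i
      apply Fin.ext
      simp
    · intro a ha
      simp only [Finset.mem_filter, Finset.mem_univ, true_and] at ha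
      have hpos : ∀ i, 1 ≤ (a.1 i : ℕ) := by
        intro i
        have h1 : (a.1 (Fin.last k) : ℕ) ≤ (a.1 i : ℕ) := a.2 (Fin.le_last i)
        have h2 : (a.1 (Fin.last k) : ℕ) ≠ 0 := fun h => ha (Fin.ext h)
        omega
      rw [← pow_add]
      congr 1
      have : ∑ i, (a.1 i : ℕ) = ∑ i : Fin (k+1), (((a.1 i : ℕ) - 1) + 1) := by
        apply Finset.sum_congr rfl
        intro i _
        have := hpos i
        omega
      rw [this, Finset.sum_add_distrib]
      simp [add_comm]

lemma Srect_zero_left (m : ℕ) : Srect 0 m = 1 := by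
  unfold Srect
  have : Unique {l : Fin 0 → Fin (m + 1) // Antitone fun i => (l i : ℕ)} :=
    ⟨⟨⟨fun i => i.elim0, fun a => a.elim0⟩⟩, fun a => Subtype.ext (funext fun i => i.elim0)⟩
  rw [Fintype.sum_unique]
  simp

lemma Srect_zero_right (k : ℕ) : Srect k 0 = 1 := by
  unfold Srect
  have : Unique {l : Fin k → Fin 1 // Antitone fun i => (l i : ℕ)} :=
    ⟨⟨⟨fun _ => 0, fun a b _ => by simp⟩⟩,
     fun a => Subtype.ext (funext fun i => Subsingleton.elim _ _)⟩
  rw [Fintype.sum_unique]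
  simp

lemma Srect_mul (k : ℕ) : ∀ m : ℕ,
    Srect k m * ∏ i ∈ Finset.range k, (1 - (RatFunc.X : RatFunc ℚ) ^ (i + 1)) =
      ∏ i ∈ Finset.range k, (1 - (RatFunc.X : RatFunc ℚ) ^ (m + i + 1)) := by
  induction k with
  | zero => simp [Srect_zero_left]
  | succ k ih =>
    intro m
    induction m with
    | zero => simp [Srect_zero_right]
    | succ m ihm =>
      rw [Srect_rec, Finset.prod_range_succ]
      rw [Finset.prod_range_succ] at ihm
      have ih1 := ih (m + 1)
      have h1 : ∏ i ∈ Finset.range (k+1), (1 - (RatFunc.X : RatFunc ℚ) ^ (m + i + 1)) =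
          (1 - (RatFunc.X : RatFunc ℚ) ^ (m + 1)) *
            ∏ i ∈ Finset.range k, (1 - (RatFunc.X : RatFunc ℚ) ^ (m + 1 + i + 1)) := by
        rw [Finset.prod_range_succ']
        rw [mul_comm]
        norm_num
        left
        apply Finset.prod_congr rfl
        intro i _
        congr 2
        omega
      have h2 : ∏ i ∈ Finset.range (k+1), (1 - (RatFunc.X : RatFunc ℚ) ^ (m + 1 + i + 1)) =
          (∏ i ∈ Finset.range k, (1 - (RatFunc.X : RatFunc ℚ) ^ (m + 1 + i + 1))) *
            (1 - (RatFunc.X : RatFunc ℚ) ^ (m + 1 + k + 1)) := Finset.prod_range_succ _ _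
      have hx : (RatFunc.X : RatFunc ℚ) ^ (m + 1 + k + 1) =
          (RatFunc.X : RatFunc ℚ) ^ (k + 1) * (RatFunc.X : RatFunc ℚ) ^ (m + 1) := by
        rw [← pow_add]; congr 1; omega
      linear_combination (1 - (RatFunc.X : RatFunc ℚ) ^ (k+1)) * ih1 +
        (RatFunc.X : RatFunc ℚ) ^ (k+1) * ihm +
        (RatFunc.X : RatFunc ℚ) ^ (k+1) * h1 - h2 +
        (∏ i ∈ Finset.range k, (1 - (RatFunc.X : RatFunc ℚ) ^ (m + 1 + i + 1))) * hx

lemma one_sub_X_pow_ne_zero (j : ℕ) : (1 : RatFunc ℚ) - (RatFunc.X : RatFunc ℚ) ^ (j + 1) ≠ 0 := by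
  intro h
  have hx : (RatFunc.X : RatFunc ℚ) ^ (j + 1) = 1 := by linear_combination -h
  have : (Polynomial.X : Polynomial ℚ) ^ (j + 1) = 1 := by
    apply RatFunc.algebraMap_injective ℚ
    simpa [map_pow, RatFunc.algebraMap_X] using hx
  have := congrArg Polynomial.natDegree this
  simp at this

/-- The sum of `q^{|λ|}` over all partitions `λ` fitting inside a
`k × (n-k)` rectangle (at most `k` parts, each of size at most `n-k`, encoded as
antitone functions `Fin k → {0,…,n-k}`) equals the Gaussian binomial coefficient
`binom(n,k)_q = ∏_{i=1}^k (1 - q^{n-k+i})/(1 - q^i)`. -/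
theorem sum_q_pow_partitions_in_rectangle_eq_gaussianBinomial (n k : ℕ) (hk : k ≤ n) :
    ∑ l : {l : Fin k → Fin (n - k + 1) // Antitone fun i => (l i : ℕ)},
        (RatFunc.X : RatFunc ℚ) ^ (∑ i, (l.1 i : ℕ)) =
      ∏ i ∈ Finset.range k,
        (1 - (RatFunc.X : RatFunc ℚ) ^ (n - k + i + 1)) / (1 - (RatFunc.X : RatFunc ℚ) ^ (i + 1)) := by
  have h := Srect_mul k (n - k)
  rw [Finset.prod_div_distrib]
  rw [eq_div_iff (Finset.prod_ne_zero_iff.mpr fun i _ => one_sub_X_pow_ne_zero i)]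
  exact h
end

section
/- The number of monotone lattice paths (steps right or up) from the bottom-left corner to the top-right corner of the snake graph G(r/s) equals r, where r/s is a rational number in lowest terms with r,s > 0. -/
/-- The tile word of the snake graph of the continued fraction `[a₁,…,a₂ₘ]`:
`R^{a₁-1} U^{a₂} R^{a₃} ⋯ R^{a₂ₘ₋₁} U^{a₂ₘ-1}`, with `false` = R (right) and
`true` = U (up). -/
def snakeWord (a : List ℕ) : List Bool :=
  (List.range a.length).flatMap fun i =>
    List.replicate
      (if i = 0 ∨ i = a.length - 1 then a.getD i 0 - 1 else a.getD i 0)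
      (i % 2 == 1)

/-- The (bottom-left corner) position of the `j`-th tile of the snake graph with
tile word `w`. -/
def tilePos (w : List Bool) (j : ℕ) : ℕ × ℕ :=
  ((w.take j).count false, (w.take j).count true)

/-- `p` is a monotone lattice path on the snake graph with word `w`: it goes from the
bottom-left corner `(0,0)` to the top-right corner, takes unit steps right or up, and
each step is an edge of some tile of the snake graph. -/
def IsSnakePath (w : List Bool) (p : Fin (w.length + 3) → ℕ × ℕ) : Prop :=
  p 0 = (0, 0) ∧
  p (Fin.last _) = ((tilePos w w.length).1 + 1, (tilePos w w.length).2 + 1) ∧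
  ∀ i : Fin (w.length + 2), ∃ j ≤ w.length,
    (p i.succ = ((p i.castSucc).1 + 1, (p i.castSucc).2) ∧
      (p i.castSucc = tilePos w j ∨
       p i.castSucc = ((tilePos w j).1, (tilePos w j).2 + 1))) ∨
    (p i.succ = ((p i.castSucc).1, (p i.castSucc).2 + 1) ∧
      (p i.castSucc = tilePos w j ∨
       p i.castSucc = ((tilePos w j).1 + 1, (tilePos w j).2)))

/-- The continuant: `cont [a₁,…,aₙ]` is the numerator of the continued fraction
`[a₁,…,aₙ]` (and `cont l.tail` is its denominator). -/
def cont : List ℕ → ℕ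
  | [] => 1
  | [a] => a
  | a :: b :: l => a * cont (b :: l) + cont l

namespace SnakeAux

def g : List Bool → Bool → ℕ
  | [], _ => 1
  | c :: w, x => if x = c then g w false + g w true else g w x

def altWord : Bool → List ℕ → List Bool
  | _, [] => []
  | c, n :: t => List.replicate n c ++ altWord (!c) t

lemma g_nil (x : Bool) : g [] x = 1 := rfl

lemma g_rep_false (n : ℕ) (w : List Bool) :
    g (List.replicate n false ++ w) false = g w false + n * g w true ∧
    g (List.replicate n false ++ w) true = g w true := by
  induction n with
  | zero => simp
  | succ n ih =>
    rw [List.replicate_succ, List.cons_append]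
    constructor
    · show (if false = false then _ else _) = _
      rw [if_pos rfl, ih.1, ih.2]; ring
    · show (if true = false then _ else _) = _
      rw [if_neg (by simp), ih.2]

lemma g_rep_true (n : ℕ) (w : List Bool) :
    g (List.replicate n true ++ w) true = g w true + n * g w false ∧
    g (List.replicate n true ++ w) false = g w false := by
  induction n with
  | zero => simp
  | succ n ih =>
    rw [List.replicate_succ, List.cons_append]
    constructor
    · show (if true = true then _ else _) = _
      rw [if_pos rfl, ih.1, ih.2]; ring
    · show (if false = true then _ else _) = _
      rw [if_neg (by simp), ih.2]

lemma cont_cons (x a : ℕ) (t : List ℕ) : cont (x :: a :: t) = x * cont (a :: t) + cont t := rfl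

lemma cont_head_succ (z : ℕ) (t : List ℕ) : cont ((z+1) :: t) = cont (z :: t) + cont t := by
  cases t with
  | nil => simp [cont]
  | cons a t => rw [cont_cons, cont_cons]; ring

theorem cont_last_succ (z : ℕ) : ∀ (u : List ℕ), cont (u ++ [z+1]) = cont (u ++ [z]) + cont u
  | [] => by simp [cont]
  | [a] => by simp [cont]; ring
  | a :: b :: u => by
    have h1 := cont_last_succ z (b :: u)
    have h2 := cont_last_succ z u
    simp only [List.cons_append] at *
    rw [cont_cons, cont_cons, cont_cons, h1, h2]
    ring


lemma altWord_two (b1 b2 : ℕ) (t : List ℕ) :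
    altWord false (b1 :: b2 :: t) =
      List.replicate b1 false ++ (List.replicate b2 true ++ altWord false t) := rfl

lemma g_blocks (b1 b2 : ℕ) (w : List Bool) :
    g (List.replicate b1 false ++ (List.replicate b2 true ++ w)) false
      = g w false + b1 * g w true + b1 * b2 * g w false ∧
    g (List.replicate b1 false ++ (List.replicate b2 true ++ w)) true
      = g w true + b2 * g w false := by
  rw [(g_rep_false _ _).1, (g_rep_false _ _).2, (g_rep_true _ _).1, (g_rep_true _ _).2]
  constructor <;> ring

lemma g_alt : ∀ (n : ℕ) (t : List ℕ), t.length = 2 * (n + 1) →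
    g (altWord false t) false = cont t + cont t.dropLast ∧
    g (altWord false t) true = cont t.tail + cont t.tail.dropLast := by
  intro n
  induction n with
  | zero =>
    intro t h
    rcases t with _|⟨b1,t⟩; · simp at h
    rcases t with _|⟨b2,t⟩; · simp at h <;> omega
    rcases t with _|⟨s1,t⟩; swap; · simp at h <;> omega
    rw [altWord_two, (g_blocks _ _ _).1, (g_blocks _ _ _).2]
    simp [g_nil, cont, altWord]
    constructor <;> ring
  | succ n ih =>
    intro t h
    rcases t with _|⟨b1,t⟩; · simp at h
    rcases t with _|⟨b2,t⟩; · simp at h <;> omega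
    rcases t with _|⟨s1,t⟩; · simp at h <;> omega
    rcases t with _|⟨s2,t⟩; · simp at h <;> omega
    have hs : (s1 :: s2 :: t).length = 2 * (n + 1) := by simp at h ⊢; omega
    obtain ⟨u, v⟩ := ih _ hs
    rw [altWord_two, (g_blocks _ _ _).1, (g_blocks _ _ _).2, u, v]
    simp only [List.tail_cons, List.dropLast_cons₂] at u v ⊢
    simp only [cont_cons]
    constructor <;> ring

lemma parity_flip (i : ℕ) : ((i+1) % 2 == 1) = !(i % 2 == 1) := by
  rcases Nat.mod_two_eq_zero_or_one i with h | h <;> simp [Nat.add_mod, h]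

lemma range_flatMap_alt : ∀ (t : List ℕ) (c : Bool),
    ((List.range t.length).flatMap fun i => List.replicate (t.getD i 0) (xor c (i % 2 == 1)))
      = altWord c t := by
  intro t
  induction t with
  | nil => intro c; rfl
  | cons x t ih =>
    intro c
    rw [List.length_cons, List.range_succ_eq_map, List.flatMap_cons, List.flatMap_map]
    show List.replicate x (xor c (0 % 2 == 1)) ++ _ = _
    have : ∀ i, ((x :: t).getD (i+1) 0) = t.getD i 0 := fun i => rfl
    simp only [Nat.succ_eq_add_one, this, parity_flip]
    have h2 : ∀ i : ℕ, (xor c (!(i % 2 == 1))) = xor (!c) (i % 2 == 1) := by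
      intro i; cases c <;> cases (i % 2 == 1) <;> rfl
    simp only [h2, ih (!c)]
    simp [altWord]

lemma getD_concat (y d : ℕ) : ∀ (u : List ℕ), (u ++ [y]).getD u.length d = y
  | [] => rfl
  | a :: u => getD_concat y d u

lemma snakeWord_eq_altWord (x y : ℕ) (u : List ℕ) :
    snakeWord (x :: u ++ [y]) = altWord false ((x-1) :: u ++ [y-1]) := by
  set a := x :: u ++ [y] with ha
  set c := (x-1) :: u ++ [y-1] with hc
  have hlen : a.length = c.length := by simp [ha, hc]
  have hagree : ∀ i ∈ List.range a.length,
      List.replicate (if i = 0 ∨ i = a.length - 1 then a.getD i 0 - 1 else a.getD i 0)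
          ((i % 2 : ℕ) == 1)
        = List.replicate (c.getD i 0) (xor false ((i % 2 : ℕ) == 1)) := by
    intro i hi
    rw [List.mem_range] at hi
    have hal : a.length = u.length + 2 := by simp [ha]
    rw [Bool.false_xor]
    congr 1
    rcases Nat.eq_zero_or_pos i with rfl | hipos
    · simp [ha, hc]
    rcases eq_or_ne i (a.length - 1) with rfl | hine
    · have h1 : a.getD (a.length - 1) 0 = y := by
        rw [ha]; show ((x :: u) ++ [y]).getD _ 0 = y
        have : a.length - 1 = (x :: u).length := by simp [ha]
        rw [this]; exact getD_concat _ _ _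
      have h2 : c.getD (a.length - 1) 0 = y - 1 := by
        rw [hc]; show (((x-1) :: u) ++ [y-1]).getD _ 0 = y - 1
        have : a.length - 1 = ((x-1) :: u).length := by simp [ha]
        rw [this]; exact getD_concat _ _ _
      rw [h1, h2, if_pos (Or.inr rfl)]
    · rw [if_neg (by omega)]
      obtain ⟨j, rfl⟩ : ∃ j, i = j + 1 := ⟨i - 1, by omega⟩
      have hj : j < u.length := by omega
      show (u ++ [y]).getD j 0 = (u ++ [y-1]).getD j 0
      rw [List.getD_append _ _ _ _ hj, List.getD_append _ _ _ _ hj]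
  have : snakeWord a = (List.range a.length).flatMap
      fun i => List.replicate (c.getD i 0) (xor false ((i % 2 : ℕ) == 1)) := by
    unfold snakeWord
    rw [List.flatMap, List.flatMap, List.map_congr_left hagree]
  rw [this, hlen, range_flatMap_alt]

lemma g_snakeWord (m : ℕ) (hm : 0 < m) (x y : ℕ) (hx : 1 ≤ x) (hy : 1 ≤ y) (u : List ℕ)
    (hlen : (x :: u ++ [y]).length = 2 * m) :
    g (snakeWord (x :: u ++ [y])) false + g (snakeWord (x :: u ++ [y])) true
      = cont (x :: u ++ [y]) := by
  rw [snakeWord_eq_altWord]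
  set c := (x-1) :: u ++ [y-1] with hcdef
  have hc : c.length = 2 * ((m-1) + 1) := by
    simp only [hcdef, List.length_cons, List.length_append, List.length_singleton]
    simp only [List.length_cons, List.length_append, List.length_singleton] at hlen
    omega
  obtain ⟨hF, hT⟩ := g_alt (m-1) c hc
  rw [hF, hT]
  have h1 : c.dropLast = (x-1) :: u := by
    rw [show c = ((x-1) :: u) ++ [y-1] from rfl, List.dropLast_concat]
  have h2 : c.tail = u ++ [y-1] := rfl
  have h3 : (u ++ [y-1]).dropLast = u := List.dropLast_concat
  rw [h1, h2, h3]
  obtain ⟨x', rfl⟩ : ∃ x', x = x' + 1 := ⟨x-1, by omega⟩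
  obtain ⟨y', rfl⟩ : ∃ y', y = y' + 1 := ⟨y-1, by omega⟩
  simp only [hcdef, Nat.add_sub_cancel]
  have e1 : cont ((x'+1) :: (u ++ [y'+1])) = cont (x' :: (u ++ [y'+1])) + cont (u ++ [y'+1]) :=
    cont_head_succ _ _
  have e2 : cont ((x'::u) ++ [y'+1]) = cont ((x'::u) ++ [y']) + cont (x'::u) :=
    cont_last_succ _ _
  have e3 : cont (u ++ [y'+1]) = cont (u ++ [y']) + cont u := cont_last_succ _ _
  rw [show x' :: (u ++ [y'+1]) = (x'::u) ++ [y'+1] from rfl] at e1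
  rw [show (x'+1) :: u ++ [y'+1] = (x'+1) :: (u ++ [y'+1]) from rfl]
  rw [show x' :: u ++ [y'] = (x'::u) ++ [y'] from rfl]
  omega

def Valid (w : List Bool) (b : Fin (w.length + 1) → Bool) : Prop :=
  ∀ (k : ℕ) (hk : k < w.length),
    b ⟨k, by omega⟩ = w.get ⟨k, hk⟩ ∨ b ⟨k + 1, by omega⟩ = b ⟨k, by omega⟩

def boolSplit {α : Type*} (P : α → Prop) (f : α → Bool) :
    {a // P a ∧ f a = false} ⊕ {a // P a ∧ f a = true} ≃ {a // P a} where
  toFun := Sum.elim (fun a => ⟨a.1, a.2.1⟩) (fun a => ⟨a.1, a.2.1⟩)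
  invFun a := if h : f a.1 = true then Sum.inr ⟨a.1, a.2, h⟩
    else Sum.inl ⟨a.1, a.2, by revert h; cases f a.1 <;> simp⟩
  left_inv := by rintro (⟨a, ha, hf⟩ | ⟨a, ha, hf⟩) <;> simp [hf]
  right_inv := by intro a; by_cases h : f a.1 = true <;> simp [h]

lemma card_split {α : Type*} [Finite α] (P : α → Prop) (f : α → Bool) :
    Nat.card {a // P a} =
      Nat.card {a // P a ∧ f a = false} + Nat.card {a // P a ∧ f a = true} := by
  rw [← Nat.card_congr (boolSplit P f), Nat.card_sum]

lemma valid_cons_iff (c : Bool) (t : List Bool) (b : Fin (t.length + 2) → Bool) :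
    Valid (c :: t) b ↔
      ((b ⟨0, by omega⟩ = c ∨ b ⟨1, by omega⟩ = b ⟨0, by omega⟩) ∧
        Valid t (fun k => b k.succ)) := by
  constructor
  · intro h
    constructor
    · exact h 0 (by simp)
    · intro k hk
      have := h (k + 1) (by simpa using Nat.succ_lt_succ hk)
      rcases this with h' | h'
      · left
        rw [List.get_cons_succ] at h'
        exact h'
      · right
        exact h'
  · rintro ⟨h0, h⟩ k hk
    cases k with
    | zero => exact h0
    | succ j =>
      have hj : j < t.length := by simpa using Nat.lt_of_succ_lt_succ hk
      rcases h j hj with h' | h'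
      · left
        rw [List.get_cons_succ]
        exact h'
      · right
        exact h'

lemma g_cons (c : Bool) (w : List Bool) (x : Bool) :
    g (c :: w) x = if x = c then g w false + g w true else g w x := rfl
lemma card_valid_first : ∀ (w : List Bool) (x : Bool),
    Nat.card {b : Fin (w.length + 1) → Bool // Valid w b ∧ b 0 = x} = g w x := by
  intro w
  induction w with
  | nil =>
    intro x
    have e : {b : Fin 1 → Bool // Valid [] b ∧ b 0 = x} ≃ PUnit.{1} :=
      { toFun := fun _ => PUnit.unit
        invFun := fun _ => ⟨fun _ => x, fun k hk => absurd hk (by simp), rfl⟩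
        left_inv := fun b => Subtype.ext (funext fun i => by
          rw [Subsingleton.elim i 0, b.2.2])
        right_inv := fun _ => rfl }
    refine (Nat.card_congr e).trans ?_
    rw [Nat.card_unique]
    rfl
  | cons c t ih =>
    intro x
    have E : {b : Fin (t.length + 2) → Bool // Valid (c :: t) b ∧ b 0 = x} ≃
        {b : Fin (t.length + 1) → Bool // Valid t b ∧ (x = c ∨ b 0 = x)} := by
      refine
        { toFun := fun b => ⟨fun k => b.1 k.succ, ?_, ?_⟩
          invFun := fun b => ⟨Fin.cons x b.1, ?_, by simp⟩
          left_inv := ?_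
          right_inv := ?_ }
      · exact ((valid_cons_iff c t b.1).1 b.2.1).2
      · have h0 := ((valid_cons_iff c t b.1).1 b.2.1).1
        have hx : b.1 0 = x := b.2.2
        rcases h0 with h0 | h0
        · left
          have h0' : b.1 0 = c := h0
          rw [← hx, h0']
        · right
          show b.1 (Fin.succ 0) = x
          have h0' : b.1 (Fin.succ 0) = b.1 0 := h0
          rw [h0', hx]
      · rcases b with ⟨b, hb2⟩
        rw [valid_cons_iff]
        constructor
        · have e1 : (⟨1, by omega⟩ : Fin (t.length + 2)) = Fin.succ (0 : Fin (t.length + 1)) := rfl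
          have e0 : (⟨0, by omega⟩ : Fin (t.length + 2)) = (0 : Fin (t.length + 2)) := rfl
          rw [e0, e1, Fin.cons_zero, Fin.cons_succ]
          rcases hb2.2 with h | h
          · left; exact h
          · right; exact h
        · intro k hk
          have := hb2.1 k hk
          simpa only [Fin.cons_succ] using this
      · rintro ⟨b, hb⟩
        apply Subtype.ext
        funext i
        induction i using Fin.cases with
        | zero => simpa using hb.2.symm
        | succ j => simp
      · rintro ⟨b, hb⟩
        apply Subtype.ext
        funext i
        simp
    by_cases hxc : x = c
    · have E2 : {b : Fin (t.length + 1) → Bool // Valid t b ∧ (x = c ∨ b 0 = x)} ≃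
          {b : Fin (t.length + 1) → Bool // Valid t b} :=
        Equiv.subtypeEquivRight (fun b => by simp [hxc])
      refine ((Nat.card_congr E).trans ((Nat.card_congr E2).trans ?_))
      rw [card_split (Valid t) (fun b => b 0)]
      rw [g_cons, if_pos hxc]
      rw [ih false, ih true]
    · have E2 : {b : Fin (t.length + 1) → Bool // Valid t b ∧ (x = c ∨ b 0 = x)} ≃
          {b : Fin (t.length + 1) → Bool // Valid t b ∧ b 0 = x} :=
        Equiv.subtypeEquivRight (fun b => by simp [hxc])
      refine ((Nat.card_congr E).trans ((Nat.card_congr E2).trans ?_))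
      rw [g_cons, if_neg hxc]
      exact ih x


def statePt (w : List Bool) (k : ℕ) (b : Bool) : ℕ × ℕ :=
  if b then ((tilePos w k).1, (tilePos w k).2 + 1) else ((tilePos w k).1 + 1, (tilePos w k).2)

lemma count_add_count (l : List Bool) : l.count false + l.count true = l.length := by
  induction l with
  | nil => rfl
  | cons a l ih => cases a <;> simp [List.count_cons] <;> omega

lemma tilePos_zero (w : List Bool) : tilePos w 0 = (0, 0) := by simp [tilePos]

lemma tilePos_sum (w : List Bool) (j : ℕ) (hj : j ≤ w.length) :
    (tilePos w j).1 + (tilePos w j).2 = j := by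
  have h := count_add_count (w.take j)
  rw [List.length_take] at h
  simp only [tilePos]
  omega

lemma tilePos_succ (w : List Bool) (j : ℕ) (hj : j < w.length) :
    tilePos w (j + 1) = statePt w j (w.get ⟨j, hj⟩) := by
  have h : w.take (j+1) = w.take j ++ [w.get ⟨j, hj⟩] := by
    rw [List.take_succ]
    congr 1
    rw [List.getElem?_eq_getElem hj]
    rfl
  cases hw : w.get ⟨j, hj⟩ <;> rw [hw] at h <;>
    simp [tilePos, statePt, h, List.count_append]

lemma statePt_ne (w : List Bool) (k : ℕ) : statePt w k false ≠ statePt w k true := by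
  simp [statePt, Prod.ext_iff]

def pext (w : List Bool) (p : Fin (w.length + 3) → ℕ × ℕ) : ℕ → ℕ × ℕ :=
  fun k => if hk : k < w.length + 3 then p ⟨k, hk⟩ else 0

lemma pext_apply (w : List Bool) (p : Fin (w.length + 3) → ℕ × ℕ) (i : Fin (w.length + 3)) :
    p i = pext w p i.1 := by
  simp [pext, i.isLt]

lemma pext_zero {w : List Bool} {p : Fin (w.length + 3) → ℕ × ℕ} (hp : IsSnakePath w p) :
    pext w p 0 = (0, 0) := by
  have h := hp.1
  rw [pext_apply w p 0] at h
  simpa using h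

lemma pext_last {w : List Bool} {p : Fin (w.length + 3) → ℕ × ℕ} (hp : IsSnakePath w p) :
    pext w p (w.length + 2) = ((tilePos w w.length).1 + 1, (tilePos w w.length).2 + 1) := by
  have h := hp.2.1
  rw [pext_apply w p (Fin.last _)] at h
  simpa [Fin.last] using h

lemma pext_step {w : List Bool} {p : Fin (w.length + 3) → ℕ × ℕ} (hp : IsSnakePath w p)
    (k : ℕ) (hk : k < w.length + 2) :
    ∃ j ≤ w.length,
      (pext w p (k+1) = ((pext w p k).1 + 1, (pext w p k).2) ∧
        (pext w p k = tilePos w j ∨ pext w p k = ((tilePos w j).1, (tilePos w j).2 + 1))) ∨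
      (pext w p (k+1) = ((pext w p k).1, (pext w p k).2 + 1) ∧
        (pext w p k = tilePos w j ∨ pext w p k = ((tilePos w j).1 + 1, (tilePos w j).2))) := by
  have h := hp.2.2 ⟨k, hk⟩
  simp only [pext_apply, Fin.val_succ, Fin.coe_castSucc] at h
  exact h

lemma path_sum {w : List Bool} {p : Fin (w.length + 3) → ℕ × ℕ} (hp : IsSnakePath w p) :
    ∀ k, k ≤ w.length + 2 → (pext w p k).1 + (pext w p k).2 = k := by
  intro k
  induction k with
  | zero => intro _; rw [pext_zero hp]; rfl
  | succ k ih =>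
    intro hk
    obtain ⟨j, hj, hc⟩ := pext_step hp k (by omega)
    have hs := ih (by omega)
    rcases hc with ⟨h1, _⟩ | ⟨h1, _⟩ <;> rw [h1] <;> simp <;> omega

lemma path_level {w : List Bool} {p : Fin (w.length + 3) → ℕ × ℕ} (hp : IsSnakePath w p)
    (k : ℕ) (hk : k < w.length + 1) :
    pext w p (k+1) = statePt w k false ∨ pext w p (k+1) = statePt w k true := by
  obtain ⟨j, hj, hc⟩ := pext_step hp (k+1) (by omega)
  have hsum := path_sum hp (k+1) (by omega)
  have key : pext w p (k+1) = tilePos w j ∨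
      pext w p (k+1) = ((tilePos w j).1, (tilePos w j).2 + 1) ∨
      pext w p (k+1) = ((tilePos w j).1 + 1, (tilePos w j).2) := by
    rcases hc with ⟨_, h | h⟩ | ⟨_, h | h⟩
    · exact Or.inl h
    · exact Or.inr (Or.inl h)
    · exact Or.inl h
    · exact Or.inr (Or.inr h)
  have htsum := tilePos_sum w j hj
  rcases key with h | h | h
  · -- j = k+1
    rw [h] at hsum
    have hjk : j = k + 1 := by omega
    subst hjk
    have hlt : k < w.length := by omega
    rw [tilePos_succ w k hlt] at h
    cases hw : w.get ⟨k, hlt⟩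
    · left; rw [h, hw]
    · right; rw [h, hw]
  · -- j = k
    rw [h] at hsum
    simp at hsum
    have hjk : j = k := by omega
    subst hjk
    right
    rw [h]
    rfl
  · rw [h] at hsum
    simp at hsum
    have hjk : j = k := by omega
    subst hjk
    left
    rw [h]
    rfl

def bOf (w : List Bool) (p : Fin (w.length + 3) → ℕ × ℕ) : Fin (w.length + 1) → Bool :=
  fun k => decide (pext w p (k.1 + 1) = statePt w k.1 true)

lemma pext_eq_statePt {w : List Bool} {p : Fin (w.length + 3) → ℕ × ℕ} (hp : IsSnakePath w p)
    (k : ℕ) (hk : k < w.length + 1) :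
    pext w p (k+1) = statePt w k (bOf w p ⟨k, hk⟩) := by
  rcases path_level hp k hk with h | h
  · have hb : bOf w p ⟨k, hk⟩ = false := by
      simp only [bOf]
      rw [decide_eq_false_iff_not]
      rw [h]
      exact statePt_ne w k
    rw [hb]; exact h
  · have hb : bOf w p ⟨k, hk⟩ = true := by
      simp only [bOf]
      rw [decide_eq_true_eq]
      exact h
    rw [hb]; exact h

lemma valid_bOf {w : List Bool} {p : Fin (w.length + 3) → ℕ × ℕ} (hp : IsSnakePath w p) :
    Valid w (bOf w p) := by
  intro k hk
  by_contra hcon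
  push_neg at hcon
  obtain ⟨h1, h2⟩ := hcon
  have hk1 : k < w.length + 1 := Nat.lt_succ_of_lt hk
  have hk2 : k + 1 < w.length + 1 := Nat.succ_lt_succ hk
  have h1' : bOf w p ⟨k, hk1⟩ ≠ w.get ⟨k, hk⟩ := h1
  have h2' : bOf w p ⟨k+1, hk2⟩ ≠ bOf w p ⟨k, hk1⟩ := h2
  have e1 := pext_eq_statePt hp k hk1
  have e2 := pext_eq_statePt hp (k+1) hk2
  obtain ⟨j, hj, hc⟩ := pext_step hp (k+1) (by omega)
  have ht := tilePos_succ w k hk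
  rcases hc with ⟨hstep, -⟩ | ⟨hstep, -⟩ <;>
  cases hw : w.get ⟨k, hk⟩ <;> rw [hw] at h1' ht <;>
  cases hb1 : bOf w p ⟨k, hk1⟩ <;> rw [hb1] at h1' h2' e1 <;>
  (try exact h1' rfl) <;>
  cases hb2 : bOf w p ⟨k+1, hk2⟩ <;> rw [hb2] at h2' e2 <;>
  (try exact h2' rfl) <;>
  (rw [e1, e2] at hstep; simp only [statePt, if_pos, if_neg] at hstep ht;
   rw [ht] at hstep; simp [Prod.ext_iff] at hstep) <;>
  omega

def pathOf (w : List Bool) (b : Fin (w.length + 1) → Bool) : Fin (w.length + 3) → ℕ × ℕ :=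
  fun i =>
    if i.1 = 0 then (0, 0)
    else if h : i.1 ≤ w.length + 1 then statePt w (i.1 - 1) (b ⟨i.1 - 1, by omega⟩)
    else ((tilePos w w.length).1 + 1, (tilePos w w.length).2 + 1)

lemma pext_pathOf_zero {w : List Bool} {b : Fin (w.length + 1) → Bool} :
    pext w (pathOf w b) 0 = (0, 0) := by
  rw [pext, dif_pos (by omega)]
  simp [pathOf]

lemma pext_pathOf_mid {w : List Bool} {b : Fin (w.length + 1) → Bool} (k : ℕ)
    (hk : k < w.length + 1) :
    pext w (pathOf w b) (k + 1) = statePt w k (b ⟨k, hk⟩) := by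
  rw [pext, dif_pos (by omega)]
  simp only [pathOf]
  rw [if_neg (by omega), dif_pos (by omega)]
  congr 1

lemma pext_pathOf_last {w : List Bool} {b : Fin (w.length + 1) → Bool} :
    pext w (pathOf w b) (w.length + 2) =
      ((tilePos w w.length).1 + 1, (tilePos w w.length).2 + 1) := by
  rw [pext, dif_pos (by omega)]
  simp only [pathOf]
  rw [if_neg (by omega), dif_neg (by omega)]

lemma isSnakePath_pathOf {w : List Bool} {b : Fin (w.length + 1) → Bool} (hb : Valid w b) :
    IsSnakePath w (pathOf w b) := by
  refine ⟨?_, ?_, ?_⟩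
  · exact (pext_apply w (pathOf w b) 0).trans pext_pathOf_zero
  · exact (pext_apply w (pathOf w b) (Fin.last _)).trans pext_pathOf_last
  · intro i
    obtain ⟨k, hk⟩ := i
    rw [pext_apply w (pathOf w b) (Fin.succ ⟨k, hk⟩), pext_apply w (pathOf w b) (Fin.castSucc ⟨k, hk⟩)]
    simp only [Fin.val_succ, Fin.coe_castSucc]
    match k, hk with
    | 0, hk =>
      have h01 : 0 < w.length + 1 := Nat.succ_pos _
      have e0 := pext_pathOf_zero (w := w) (b := b)
      have e1 := pext_pathOf_mid (b := b) 0 h01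
      cases hb0 : b ⟨0, h01⟩ <;> rw [hb0] at e1
      · exact ⟨0, Nat.zero_le _, Or.inl ⟨by rw [e0, e1]; simp [statePt, tilePos_zero],
          Or.inl (by rw [e0, tilePos_zero])⟩⟩
      · exact ⟨0, Nat.zero_le _, Or.inr ⟨by rw [e0, e1]; simp [statePt, tilePos_zero],
          Or.inl (by rw [e0, tilePos_zero])⟩⟩
    | (t+1), hk =>
      by_cases htL : t < w.length
      · have hta : t < w.length + 1 := by omega
        have htb : t + 1 < w.length + 1 := by omega
        have e1 := pext_pathOf_mid (b := b) t hta
        have e2 := pext_pathOf_mid (b := b) (t+1) htb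
        have hv : b ⟨t, hta⟩ = w.get ⟨t, htL⟩ ∨ b ⟨t+1, htb⟩ = b ⟨t, hta⟩ := hb t htL
        have ht := tilePos_succ w t htL
        cases hw : w.get ⟨t, htL⟩ <;> rw [hw] at hv ht <;>
          cases hb1 : b ⟨t, hta⟩ <;> rw [hb1] at hv e1 <;>
            cases hb2 : b ⟨t+1, htb⟩ <;> rw [hb2] at hv e2
        · -- w=false b1=false b2=false : R step, j = t+1
          exact ⟨t+1, by omega, Or.inl ⟨by rw [e1, e2]; simp [statePt, ht],
            Or.inl (by rw [e1, ht])⟩⟩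
        · -- w=false b1=false b2=true : U step, j = t+1
          exact ⟨t+1, by omega, Or.inr ⟨by rw [e1, e2]; simp [statePt, ht],
            Or.inl (by rw [e1, ht])⟩⟩
        · -- w=false b1=true b2=false : invalid
          simp at hv
        · -- w=false b1=true b2=true : R step, j = t
          exact ⟨t, by omega, Or.inl ⟨by rw [e1, e2]; simp [statePt, ht],
            Or.inr (by rw [e1]; rfl)⟩⟩
        · -- w=true b1=false b2=false : U step, j = t
          exact ⟨t, by omega, Or.inr ⟨by rw [e1, e2]; simp [statePt, ht],
            Or.inr (by rw [e1]; rfl)⟩⟩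
        · -- w=true b1=false b2=true : invalid
          simp at hv
        · -- w=true b1=true b2=false : R step, j = t+1
          exact ⟨t+1, by omega, Or.inl ⟨by rw [e1, e2]; simp [statePt, ht],
            Or.inl (by rw [e1, ht])⟩⟩
        · -- w=true b1=true b2=true : U step, j = t+1
          exact ⟨t+1, by omega, Or.inr ⟨by rw [e1, e2]; simp [statePt, ht],
            Or.inl (by rw [e1, ht])⟩⟩
      · have htL' : t = w.length := by omega
        subst htL'
        have hta : w.length < w.length + 1 := by omega
        have e1 := pext_pathOf_mid (b := b) w.length hta
        have e2 := pext_pathOf_last (w := w) (b := b)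
        cases hbL : b ⟨w.length, hta⟩ <;> rw [hbL] at e1
        · exact ⟨w.length, le_refl _, Or.inr ⟨by rw [e1, e2]; simp [statePt],
            Or.inr (by rw [e1]; rfl)⟩⟩
        · exact ⟨w.length, le_refl _, Or.inl ⟨by rw [e1, e2]; simp [statePt],
            Or.inr (by rw [e1]; rfl)⟩⟩

def pathEquiv (w : List Bool) :
    {p : Fin (w.length + 3) → ℕ × ℕ // IsSnakePath w p} ≃
      {b : Fin (w.length + 1) → Bool // Valid w b} where
  toFun p := ⟨bOf w p.1, valid_bOf p.2⟩
  invFun b := ⟨pathOf w b.1, isSnakePath_pathOf b.2⟩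
  left_inv := by
    rintro ⟨p, hp⟩
    apply Subtype.ext
    funext i
    show pathOf w (bOf w p) i = p i
    rw [pext_apply w (pathOf w (bOf w p)) i, pext_apply w p i]
    obtain ⟨k, hk⟩ := i
    show pext w (pathOf w (bOf w p)) k = pext w p k
    match k, hk with
    | 0, hk => rw [pext_pathOf_zero, pext_zero hp]
    | (k+1), hk =>
      by_cases hkk : k < w.length + 1
      · rw [pext_pathOf_mid k hkk, pext_eq_statePt hp k hkk]
      · have hke : k + 1 = w.length + 2 := by omega
        rw [hke, pext_pathOf_last, pext_last hp]
  right_inv := by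
    rintro ⟨b, hb⟩
    apply Subtype.ext
    funext i
    show bOf w (pathOf w b) i = b i
    obtain ⟨k, hk⟩ := i
    simp only [bOf]
    rw [pext_pathOf_mid k hk]
    cases hbk : b ⟨k, hk⟩
    · rw [decide_eq_false_iff_not]
      exact statePt_ne w k
    · simp

end SnakeAux

/-- For `r/s` in lowest terms with continued fraction `[a₁,…,a₂ₘ]`,
the number of monotone lattice paths from the bottom-left to the top-right corner
of the snake graph `G(r/s)` equals `r`. -/
theorem card_snake_paths_eq_numerator (m : ℕ) (hm : 0 < m) (a : List ℕ)
    (hlen : a.length = 2 * m) (hpos : ∀ x ∈ a, 1 ≤ x)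
    (r s : ℕ) (hr : r = cont a) (hs : s = cont a.tail) (hcop : Nat.gcd r s = 1) :
    Nat.card {p : Fin ((snakeWord a).length + 3) → ℕ × ℕ //
      IsSnakePath (snakeWord a) p} = r := by
  obtain ⟨x, t, rfl⟩ : ∃ x t, a = x :: t := by
    cases a with
    | nil => simp at hlen; omega
    | cons x t => exact ⟨x, t, rfl⟩
  obtain ⟨u, y, rfl⟩ : ∃ u y, t = u ++ [y] := by
    rcases List.eq_nil_or_concat t with rfl | ⟨u, y, rfl⟩
    · simp at hlen; omega
    · exact ⟨u, y, by simp⟩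
  have hx : 1 ≤ x := hpos x (by simp)
  have hy : 1 ≤ y := hpos y (by simp)
  refine Eq.trans (Nat.card_congr (SnakeAux.pathEquiv (snakeWord (x :: u ++ [y])))) ?_
  rw [SnakeAux.card_split (SnakeAux.Valid (snakeWord (x :: u ++ [y]))) (fun b => b 0)]
  rw [SnakeAux.card_valid_first _ false, SnakeAux.card_valid_first _ true, hr]
  exact SnakeAux.g_snakeWord m hm x y hx hy u hlen
end

section
/- Let r/s = [a_1,b_1,a_2,b_2,…,a_m,b_m] be a continued fraction expansion. Then the partition λ(r/s) determined by the bottom boundary of the snake graph G(r/s) is λ = (λ_1^{b_m}, λ_2^{b_{m−1}}, …, λ_m^{b_1}) where λ_k = ∑_{i=1}^{m+1−k} a_i (exponents denote multiplicities of parts). -/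
/-- The height (number of rows) of the snake graph with word `w`. -/
def snakeHeight (w : List Bool) : ℕ := w.count true + 1

/-- The length of row `y` of the partition `λ(G)` whose bottom boundary coincides with
the bottom boundary of the snake graph `G` (rows indexed from the bottom): one plus the
largest `x`-coordinate of a tile in some row `y' ≤ y`. -/
def rowLen (w : List Bool) (y : ℕ) : ℕ :=
  ((Finset.range (w.length + 1)).filter fun j => (tilePos w j).2 ≤ y).sup
    (fun j => (tilePos w j).1) + 1

/-- Interleave `[a₁,…,aₘ]` and `[b₁,…,bₘ]` into `[a₁,b₁,…,aₘ,bₘ]`. -/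
def interleave (a b : List ℕ) : List ℕ := (a.zip b).flatMap fun p => [p.1, p.2]

/-- recursive version of rowLen -/
def mr : List Bool → ℕ → ℕ
  | [], _ => 1
  | false :: w, y => mr w y + 1
  | true :: w, y => if y = 0 then 1 else mr w (y - 1)

lemma range_succ_ins (n : ℕ) :
    Finset.range (n + 1) = insert 0 ((Finset.range n).image Nat.succ) := by
  ext k
  simp only [Finset.mem_range, Finset.mem_insert, Finset.mem_image]
  constructor
  · rintro h
    rcases Nat.eq_zero_or_pos k with h0 | h0
    · exact Or.inl h0
    · exact Or.inr ⟨k - 1, by omega, by omega⟩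
  · rintro (rfl | ⟨j, hj, rfl⟩) <;> omega

lemma sup_add_one (s : Finset ℕ) (g : ℕ → ℕ) (hs : s.Nonempty) :
    s.sup (fun j => g j + 1) = s.sup g + 1 := by
  apply le_antisymm
  · exact Finset.sup_le fun j hj => Nat.succ_le_succ (Finset.le_sup hj)
  · obtain ⟨j, hj, hje⟩ := Finset.exists_mem_eq_sup s hs g
    rw [hje]
    exact Finset.le_sup (f := fun j => g j + 1) hj

lemma rowLen_eq_mr (w : List Bool) (y : ℕ) : rowLen w y = mr w y := by
  induction w generalizing y with
  | nil => simp [rowLen, mr, tilePos]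
  | cons c w ih =>
    have key : ∀ (P : ℕ → Prop) [DecidablePred P] (f : ℕ → ℕ) (n : ℕ), P 0 →
        ((Finset.range (n + 1)).filter P).sup f =
          f 0 ⊔ ((Finset.range n).filter (fun j => P (j+1))).sup (fun j => f (j+1)) := by
      intro P _ f n hP0
      rw [range_succ_ins, Finset.filter_insert, if_pos hP0, Finset.sup_insert,
        Finset.filter_image, Finset.sup_image]
      rfl
    have h00 : (tilePos (c :: w) 0).2 ≤ y := by simp [tilePos]
    rw [rowLen, List.length_cons,
      key (fun j => (tilePos (c :: w) j).2 ≤ y) (fun j => (tilePos (c :: w) j).1)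
        (w.length + 1) h00]
    have hsucc : ∀ j, tilePos (c :: w) (j + 1) =
        (if c then ((tilePos w j).1, (tilePos w j).2 + 1)
         else ((tilePos w j).1 + 1, (tilePos w j).2)) := by
      intro j
      cases c <;> simp [tilePos, List.take_succ_cons, List.count_cons]
    have h0 : (tilePos (c :: w) 0).1 = 0 := by simp [tilePos]
    cases c with
    | false =>
      simp only [hsucc, if_false, Bool.false_eq_true, h0]
      have hne : ((Finset.range (w.length + 1)).filter
          fun j => (tilePos w j).2 ≤ y).Nonempty :=
        ⟨0, Finset.mem_filter.mpr ⟨by simp, by simp [tilePos]⟩⟩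
      rw [sup_add_one _ _ hne]
      have := ih y; rw [rowLen] at this
      simp only [mr]
      omega
    | true =>
      simp only [hsucc, if_true, h0]
      cases y with
      | zero =>
        have he : (Finset.filter (fun j => (tilePos w j).2 + 1 ≤ 0)
            (Finset.range (w.length + 1))) = ∅ := by
          apply Finset.filter_false_of_mem; intro j _; omega
        simp [he, mr]
      | succ y' =>
        simp only [Nat.add_le_add_iff_right]
        have hne : ((Finset.range (w.length + 1)).filter
            fun j => (tilePos w j).2 ≤ y').Nonempty :=
          ⟨0, Finset.mem_filter.mpr ⟨by simp, by simp [tilePos]⟩⟩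
        simp only [zero_le, sup_of_le_right]
        have := ih y'; rw [rowLen] at this
        have hmr : mr (true :: w) (y' + 1) = mr w y' := by simp [mr]
        rw [hmr]; omega

lemma mr_rep_false (c : ℕ) (w : List Bool) (y : ℕ) :
    mr (List.replicate c false ++ w) y = c + mr w y := by
  induction c with
  | zero => simp
  | succ c ih => simpa [List.replicate_succ, mr, ih] using by omega

lemma mr_rep_true (d : ℕ) (w : List Bool) (y : ℕ) :
    mr (List.replicate d true ++ w) y = if y < d then 1 else mr w (y - d) := by
  induction d generalizing y with
  | zero => simp
  | succ d ih =>
    rw [List.replicate_succ, List.cons_append]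
    show (if y = 0 then 1 else mr (List.replicate d true ++ w) (y - 1)) = _
    rcases Nat.eq_zero_or_pos y with rfl | hy
    · simp
    · rw [if_neg (by omega), ih]
      rcases Nat.lt_or_ge y (d + 1) with h | h
      · rw [if_pos (by omega), if_pos (by omega)]
      · rw [if_neg (by omega), if_neg (by omega)]
        congr 1
        omega

/-- tail of the snake word: blocks with the last one shortened by one. -/
def swa : Bool → List ℕ → List Bool
  | _, [] => []
  | p, [x] => List.replicate (x - 1) p
  | p, x :: y :: xs => List.replicate x p ++ swa (!p) (y :: xs)

lemma flatMap_range_succ {β : Type*} (f : ℕ → List β) (n : ℕ) :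
    (List.range (n + 1)).flatMap f = f 0 ++ (List.range n).flatMap (fun i => f (i + 1)) := by
  rw [List.range_succ_eq_map, List.flatMap_cons]
  congr 1
  rw [List.flatMap_map]

lemma flatMap_range_congr {β : Type*} {f g : ℕ → List β} (n : ℕ)
    (h : ∀ i < n, f i = g i) :
    (List.range n).flatMap f = (List.range n).flatMap g := by
  unfold List.flatMap
  congr 1
  apply List.map_congr_left
  intro i hi
  exact h i (List.mem_range.mp hi)

lemma map_range_congr {β : Type*} {f g : ℕ → β} (n : ℕ)
    (h : ∀ i < n, f i = g i) :
    (List.range n).map f = (List.range n).map g := by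
  apply List.map_congr_left
  intro i hi
  exact h i (List.mem_range.mp hi)

lemma parity_shift (i : ℕ) (q : Bool) : (((i + 1) % 2 == 1) ^^ q) = (((i % 2 == 1)) ^^ !q) := by
  rcases Nat.mod_two_eq_zero_or_one i with h | h <;>
    cases q <;> simp [Nat.add_mod, h]

lemma swL (l : List ℕ) (q : Bool) :
    (List.range l.length).flatMap
      (fun i => List.replicate (if i = l.length - 1 then l.getD i 0 - 1 else l.getD i 0)
        ((i % 2 == 1) ^^ q)) = swa q l := by
  induction l generalizing q with
  | nil => simp [swa]
  | cons x xs ih =>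
    rw [List.length_cons, flatMap_range_succ]
    cases xs with
    | nil => simp [swa]
    | cons y ys =>
      have hcongr : ∀ i < (y :: ys).length,
          (List.replicate
            (if i + 1 = (y :: ys).length + 1 - 1 then (x :: y :: ys).getD (i+1) 0 - 1
              else (x :: y :: ys).getD (i+1) 0) (((i+1) % 2 == 1) ^^ q)) =
          (List.replicate
            (if i = (y :: ys).length - 1 then (y :: ys).getD i 0 - 1
              else (y :: ys).getD i 0) ((i % 2 == 1) ^^ !q)) := by
        intro i hi
        rw [parity_shift]
        congr 1
        have hL : (y :: ys).length = ys.length + 1 := rfl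
        have hc : (i + 1 = (y :: ys).length + 1 - 1) ↔ (i = (y :: ys).length - 1) := by
          omega
        simp only [List.getD_cons_succ, hc]
      rw [flatMap_range_congr _ hcongr, ih (!q)]
      have h0 : ¬ ((0:ℕ) = (y :: ys).length + 1 - 1) := by simp
      rw [if_neg h0]
      simp [swa]

lemma snakeWord_cons (x : ℕ) (xs : List ℕ) :
    snakeWord (x :: xs) = List.replicate (x - 1) false ++ swa true xs := by
  rw [snakeWord]
  have hL : (x :: xs).length = xs.length + 1 := rfl
  rw [hL, flatMap_range_succ]
  congr 1
  rw [flatMap_range_congr (g := fun i =>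
      List.replicate (if i = xs.length - 1 then xs.getD i 0 - 1 else xs.getD i 0)
        ((i % 2 == 1) ^^ true)) xs.length, swL xs true]
  intro i hi
  have hb : (((i + 1) % 2 == 1) : Bool) = ((i % 2 == 1) ^^ true) := by
    have := parity_shift i false
    simpa using this
  rw [hb]
  congr 1
  have hcond : (i + 1 = 0 ∨ i + 1 = xs.length + 1 - 1) ↔ (i = xs.length - 1) := by
    omega
  simp only [List.getD_cons_succ, hcond]

lemma interleave_cons (x y : ℕ) (a b : List ℕ) :
    interleave (x :: a) (y :: b) = x :: y :: interleave a b := by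
  simp [interleave]

lemma sw_pair (x y : ℕ) :
    snakeWord (interleave [x] [y]) =
      List.replicate (x - 1) false ++ List.replicate (y - 1) true := by
  have : interleave [x] [y] = [x, y] := by simp [interleave]
  rw [this, snakeWord_cons]
  rfl

lemma sw_step (x y x2 y2 : ℕ) (a b : List ℕ) (h2 : 1 ≤ x2) :
    snakeWord (interleave (x :: x2 :: a) (y :: y2 :: b)) =
      List.replicate (x - 1) false ++ List.replicate y true ++
        false :: snakeWord (interleave (x2 :: a) (y2 :: b)) := by
  rw [interleave_cons, interleave_cons, snakeWord_cons, snakeWord_cons]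
  obtain ⟨x2', rfl⟩ : ∃ k, x2 = k + 1 := ⟨x2 - 1, by omega⟩
  show _ ++ swa true (y :: (x2' + 1) :: y2 :: interleave a b) = _
  rw [show swa true (y :: (x2' + 1) :: y2 :: interleave a b) =
      List.replicate y true ++ swa false ((x2' + 1) :: y2 :: interleave a b) from rfl,
    show swa false ((x2' + 1) :: y2 :: interleave a b) =
      List.replicate (x2' + 1) false ++ swa true (y2 :: interleave a b) from rfl]
  simp [List.replicate_succ]

lemma mr_rep_true' (d t : ℕ) : mr (List.replicate d true) t = 1 := by
  have := mr_rep_true d [] t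
  rw [List.append_nil] at this
  rw [this]
  split <;> rfl

lemma main_lemma (a : List ℕ) : ∀ (b : List ℕ), a.length = b.length → a ≠ [] →
    (∀ x ∈ a, 1 ≤ x) → (∀ x ∈ b, 1 ≤ x) →
    (List.range (snakeHeight (snakeWord (interleave a b)))).map
        (fun i => rowLen (snakeWord (interleave a b))
          (snakeHeight (snakeWord (interleave a b)) - 1 - i)) =
      (List.range a.length).flatMap
        (fun j => List.replicate (b.getD (a.length - 1 - j) 0)
          ((a.take (a.length - j)).sum)) := by
  induction a with
  | nil => intro b _ hne _ _; exact absurd rfl hne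
  | cons x a' ih =>
    intro b hlen hne hapos hbpos
    obtain ⟨y, b', rfl⟩ : ∃ y b'', b = y :: b'' := by
      cases b with
      | nil => simp at hlen
      | cons y b'' => exact ⟨_, _, rfl⟩
    have hx : 1 ≤ x := hapos x (by simp)
    have hy : 1 ≤ y := hbpos y (by simp)
    cases a' with
    | nil =>
      obtain rfl : b' = [] := by
        cases b' with
        | nil => rfl
        | cons _ _ => simp at hlen
      rw [sw_pair]
      have hH : snakeHeight (List.replicate (x - 1) false ++
          List.replicate (y - 1) true) = y := by
        rw [snakeHeight]
        simp [List.count_append, List.count_replicate]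
        omega
      rw [hH]
      have hrow : ∀ t, rowLen (List.replicate (x - 1) false ++
          List.replicate (y - 1) true) t = x := by
        intro t
        rw [rowLen_eq_mr, mr_rep_false, mr_rep_true']
        omega
      rw [map_range_congr (g := fun _ => x) y (fun i _ => hrow _)]
      rw [List.map_const', List.length_range]
      simp [List.range_succ]
    | cons x2 a'' =>
      obtain ⟨y2, b'', rfl⟩ : ∃ c d, b' = c :: d := by
        cases b' with
        | nil => simp at hlen
        | cons c d => exact ⟨_, _, rfl⟩
      have hx2 : 1 ≤ x2 := hapos x2 (by simp)
      set w' := snakeWord (interleave (x2 :: a'') (y2 :: b'')) with hw'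
      set H' := snakeHeight w' with hH'
      have hw : snakeWord (interleave (x :: x2 :: a'') (y :: y2 :: b'')) =
          List.replicate (x - 1) false ++ List.replicate y true ++ false :: w' :=
        sw_step x y x2 y2 a'' b'' hx2
      have hH : snakeHeight (snakeWord (interleave (x :: x2 :: a'') (y :: y2 :: b''))) =
          H' + y := by
        rw [hw, snakeHeight, hH', snakeHeight]
        simp [List.count_append, List.count_replicate, List.count_cons]
        omega
      have hrow : ∀ t, rowLen (snakeWord (interleave (x :: x2 :: a'') (y :: y2 :: b''))) t =
          if t < y then x else x + rowLen w' (t - y) := by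
        intro t
        rw [rowLen_eq_mr, hw, List.append_assoc, mr_rep_false, mr_rep_true]
        rcases Nat.lt_or_ge t y with h | h
        · rw [if_pos h, if_pos h]; omega
        · rw [if_neg (by omega), if_neg (by omega), rowLen_eq_mr]
          show x - 1 + (mr w' (t - y) + 1) = _
          omega
      rw [hH, List.range_add, List.map_append, List.map_map]
      have hH'pos : 1 ≤ H' := Nat.le_add_left 1 _
      -- first part
      have hpart1 : (List.range H').map
            (fun i => rowLen (snakeWord (interleave (x :: x2 :: a'') (y :: y2 :: b'')))
              (H' + y - 1 - i)) =
          (List.range H').map (fun i => x + rowLen w' (H' - 1 - i)) := by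
        apply map_range_congr
        intro i hiH
        rw [hrow, if_neg (by omega)]
        have harg : H' + y - 1 - i - y = H' - 1 - i := by omega
        rw [harg]
      have hpart2 : (List.range y).map
            ((fun i => rowLen (snakeWord (interleave (x :: x2 :: a'') (y :: y2 :: b'')))
              (H' + y - 1 - i)) ∘ (fun i => H' + i)) =
          List.replicate y x := by
        rw [map_range_congr (g := fun _ => x) y ?_, List.map_const', List.length_range]
        intro i hiy
        show rowLen _ (H' + y - 1 - (H' + i)) = x
        rw [hrow, if_pos (by omega)]
      rw [hpart1, hpart2]
      -- IH
      have hih := ih (y2 :: b'')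
        (by simp only [List.length_cons] at hlen ⊢; omega)
        (by simp) (fun z hz => hapos z (by simp [hz]))
        (fun z hz => hbpos z (by simp [hz]))
      have hmap : (List.range H').map (fun i => x + rowLen w' (H' - 1 - i)) =
          ((List.range H').map (fun i => rowLen w' (H' - 1 - i))).map (fun v => x + v) := by
        rw [List.map_map]
        rfl
      rw [hmap, hih, List.map_flatMap]
      have hlen1 : (x :: x2 :: a'').length = (x2 :: a'').length + 1 := rfl
      rw [hlen1, List.range_succ, List.flatMap_append]
      congr 1
      · apply flatMap_range_congr
        intro j hj
        rw [List.map_replicate]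
        have h1 : (x2 :: a'').length + 1 - 1 - j = ((x2 :: a'').length - 1 - j) + 1 := by
          omega
        have h2 : (x2 :: a'').length + 1 - j = ((x2 :: a'').length - j) + 1 := by omega
        rw [h1, h2, List.getD_cons_succ, List.take_succ_cons, List.sum_cons]
      · have h1 : (x2 :: a'').length + 1 - 1 - (x2 :: a'').length = 0 := by omega
        have h2 : (x2 :: a'').length + 1 - (x2 :: a'').length = 1 := by omega
        simp [h1, h2]


/-- For `r/s = [a₁,b₁,…,aₘ,bₘ]`, the partition `λ(r/s)` determined by
the bottom boundary of the snake graph `G(r/s)` (listed from the largest part, i.e.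
rows from top to bottom) is `(λ₁^{bₘ}, λ₂^{bₘ₋₁}, …, λₘ^{b₁})` where
`λₖ = a₁ + ⋯ + a_{m+1-k}`. -/

theorem snake_lambda_partition (m : ℕ) (hm : 0 < m) (a b : List ℕ)
    (ha : a.length = m) (hb : b.length = m)
    (hapos : ∀ x ∈ a, 1 ≤ x) (hbpos : ∀ x ∈ b, 1 ≤ x) :
    (List.range (snakeHeight (snakeWord (interleave a b)))).map
        (fun i => rowLen (snakeWord (interleave a b))
          (snakeHeight (snakeWord (interleave a b)) - 1 - i)) =
      (List.range m).flatMap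
        (fun j => List.replicate (b.getD (m - 1 - j) 0) ((a.take (m - j)).sum)) := by
  subst ha
  exact main_lemma a b hb.symm (by rintro rfl; simp at hm) hapos hbpos
end
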